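/- If a tree T is γ_tR-edge-critical, then T contains no stem (support vertex of a leaf) of degree at least 3; in particular T has no strong stems (stems adjacent to two or more leaves). -/
import Mathlib


/-- A total Roman dominating function: values in {0,1,2}, every vertex with value 0
has a neighbour with value 2, and vertices with positive value are not isolated in
the induced subgraph of positive-value vertices. -/
def TRDF {V : Type*} (G : SimpleGraph V) (f : V → ℕ) : Prop :=
  (∀ v, f v ≤ 2) ∧
  (∀ v, f v = 0 → ∃ u, G.Adj v u ∧ f u = 2) ∧
  (∀ v, 0 < f v → ∃ u, G.Adj v u ∧ 0 < f u)

/-- The total Roman domination number. -/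
noncomputable def trdn {V : Type*} [Fintype V] (G : SimpleGraph V) : ℕ :=
  sInf {w | ∃ f : V → ℕ, TRDF G f ∧ w = ∑ v, f v}

/-- The graph `G + uv`. -/
def addEdge {V : Type*} (G : SimpleGraph V) (u v : V) : SimpleGraph V :=
  G ⊔ SimpleGraph.fromEdgeSet {s(u, v)}

/-- `G` has no isolated vertices. -/
def NoIsolated {V : Type*} (G : SimpleGraph V) : Prop := ∀ v, ∃ u, G.Adj v u

lemma no_triangle {V : Type*} {G : SimpleGraph V} (h : G.IsAcyclic) {x y z : V}
    (hxy : G.Adj x y) (hxz : G.Adj x z) (hyz : G.Adj y z) : False := by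
  apply h (SimpleGraph.Walk.cons hxy (SimpleGraph.Walk.cons hyz
      (SimpleGraph.Walk.cons hxz.symm SimpleGraph.Walk.nil)))
  simp [SimpleGraph.Walk.isCycle_def, SimpleGraph.Walk.isTrail_def, Sym2.eq_iff,
    hxy.ne, hxy.ne', hxz.ne, hxz.ne', hyz.ne, hyz.ne']

lemma addEdge_adj {V : Type*} (G : SimpleGraph V) {y z a b : V} :
    (addEdge G y z).Adj a b ↔ G.Adj a b ∨ (a ≠ b ∧ ((a = y ∧ b = z) ∨ (a = z ∧ b = y))) := by
  simp only [addEdge, SimpleGraph.sup_adj, SimpleGraph.fromEdgeSet_adj,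
    Set.mem_singleton_iff, Sym2.eq_iff]
  tauto

lemma key {V : Type*} [Fintype V] {G : SimpleGraph V} {x w y z : V}
    (hxw : G.Adj x w) (hw : ∀ u, G.Adj w u → u = x)
    (hxy : G.Adj x y) (hxz : G.Adj x z)
    (hwy : w ≠ y) (hwz : w ≠ z) (hyz : y ≠ z)
    (g : V → ℕ) (hg : TRDF (addEdge G y z) g) :
    ∃ g' : V → ℕ, TRDF G g' ∧ ∑ v, g' v ≤ ∑ v, g v := by
  classical
  obtain ⟨hg2, hg0, hgp⟩ := hg
  have hwx : w ≠ x := fun h => G.irrefl (h ▸ hxw)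
  have hxy' : x ≠ y := hxy.ne
  have hxz' : x ≠ z := hxz.ne
  -- every addEdge-neighbour of w equals x
  have hwnbr : ∀ u, (addEdge G y z).Adj w u → u = x := by
    intro u hu
    rcases (addEdge_adj G).1 hu with h | ⟨_, ⟨rfl, rfl⟩ | ⟨rfl, rfl⟩⟩
    · exact hw u h
    · exact absurd rfl hwy
    · exact absurd rfl hwz
  -- g x > 0
  have hgx : 0 < g x := by
    rcases Nat.eq_zero_or_pos (g w) with h0 | hp
    · obtain ⟨u, hu, hu2⟩ := hg0 w h0
      have := hwnbr u hu; subst this; omega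
    · obtain ⟨u, hu, hup⟩ := hgp w hp
      have := hwnbr u hu; subst this; exact hup
  by_cases hcase : g x = 2 ∨ (g y = 0 ∧ g z = 0)
  · -- g itself is a TRDF of G
    refine ⟨g, ⟨hg2, ?_, ?_⟩, le_rfl⟩
    · intro v hv
      obtain ⟨u, hu, hu2⟩ := hg0 v hv
      rcases (addEdge_adj G).1 hu with h | ⟨_, ⟨rfl, rfl⟩ | ⟨rfl, rfl⟩⟩
      · exact ⟨u, h, hu2⟩
      · rcases hcase with h2 | ⟨h0, _⟩
        · exact ⟨x, hxy.symm, h2⟩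
        · exact absurd hv (by omega)
      · rcases hcase with h2 | ⟨_, h0⟩
        · exact ⟨x, hxz.symm, h2⟩
        · exact absurd hv (by omega)
    · intro v hv
      obtain ⟨u, hu, hup⟩ := hgp v hv
      rcases (addEdge_adj G).1 hu with h | ⟨_, ⟨rfl, rfl⟩ | ⟨rfl, rfl⟩⟩
      · exact ⟨u, h, hup⟩
      · rcases hcase with h2 | ⟨h0, _⟩
        · exact ⟨x, hxy.symm, by omega⟩
        · exact absurd hv (by omega)
      · rcases hcase with h2 | ⟨_, h0⟩
        · exact ⟨x, hxz.symm, by omega⟩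
        · exact absurd hv (by omega)
  · push_neg at hcase
    have hgx1 : g x = 1 := by rcases hcase with ⟨h, _⟩; have := hg2 x; omega
    have hpos : 0 < g y ∨ 0 < g z := by
      rcases hcase with ⟨_, h⟩
      by_cases hy : g y = 0
      · exact Or.inr (Nat.pos_of_ne_zero (h hy))
      · exact Or.inl (Nat.pos_of_ne_zero hy)
    have hgw : 0 < g w := by
      by_contra h
      have h0 : g w = 0 := by omega
      obtain ⟨u, hu, hu2⟩ := hg0 w h0
      have := hwnbr u hu; subst this; omega
    set g' : V → ℕ := fun v => if v = x then 2 else if v = w then g w - 1 else g v with hg'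
    have g'x : g' x = 2 := by simp [hg']
    have g'w : g' w = g w - 1 := by simp [hg', hwx]
    have g'other : ∀ v, v ≠ x → v ≠ w → g' v = g v := by
      intro v h1 h2; simp [hg', h1, h2]
    have g'y : g' y = g y := g'other y (Ne.symm hxy') (Ne.symm hwy)
    have g'z : g' z = g z := g'other z (Ne.symm hxz') (Ne.symm hwz)
    refine ⟨g', ⟨?_, ?_, ?_⟩, ?_⟩
    · intro v
      by_cases h1 : v = x
      · subst h1; omega
      · by_cases h2 : v = w
        · rw [h2, g'w]; have := hg2 w; omega
        · rw [g'other v h1 h2]; exact hg2 v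
    · -- domination
      intro v hv
      have hvx : v ≠ x := fun h => by rw [h, g'x] at hv; omega
      by_cases hvw : v = w
      · subst hvw; exact ⟨x, hxw.symm, g'x⟩
      · rw [g'other v hvx hvw] at hv
        obtain ⟨u, hu, hu2⟩ := hg0 v hv
        have hux : u ≠ x := fun h => by rw [h] at hu2; omega
        have huw : u ≠ w := by
          intro h; rw [h] at hu
          exact hvx (hwnbr v hu.symm)
        have hgu' : g' u = 2 := by rw [g'other u hux huw]; exact hu2
        rcases (addEdge_adj G).1 hu with h | ⟨_, ⟨rfl, rfl⟩ | ⟨rfl, rfl⟩⟩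
        · exact ⟨u, h, hgu'⟩
        · exact ⟨x, hxy.symm, g'x⟩
        · exact ⟨x, hxz.symm, g'x⟩
    · -- totality
      intro v hv
      by_cases hvx : v = x
      · subst hvx
        rcases hpos with hp | hp
        · exact ⟨y, hxy, by omega⟩
        · exact ⟨z, hxz, by omega⟩
      by_cases hvw : v = w
      · subst hvw; exact ⟨x, hxw.symm, by omega⟩
      · rw [g'other v hvx hvw] at hv
        obtain ⟨u, hu, hup⟩ := hgp v hv
        by_cases hux : u = x
        · have hvadj : G.Adj v x := by
            rw [hux] at hu
            rcases (addEdge_adj G).1 hu with h | ⟨_, ⟨h1, h2⟩ | ⟨h1, h2⟩⟩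
            · exact h
            · exact absurd h2 hxz'
            · exact absurd h2 hxy'
          exact ⟨x, hvadj, by rw [g'x]; omega⟩
        · by_cases huw : u = w
          · exfalso
            rw [huw] at hu
            exact hvx (hwnbr v hu.symm)
          · have hgu' : 0 < g' u := by rw [g'other u hux huw]; exact hup
            rcases (addEdge_adj G).1 hu with h | ⟨_, ⟨rfl, rfl⟩ | ⟨rfl, rfl⟩⟩
            · exact ⟨u, h, hgu'⟩
            · exact ⟨x, hxy.symm, by omega⟩
            · exact ⟨x, hxz.symm, by omega⟩
    · -- sum
      have hx : x ∈ (Finset.univ : Finset V) := Finset.mem_univ x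
      have hwm : w ∈ Finset.univ.erase x := Finset.mem_erase.2 ⟨hwx, Finset.mem_univ w⟩
      have e1 : ∀ f : V → ℕ, ∑ v, f v = f x + (f w + ∑ v ∈ (Finset.univ.erase x).erase w, f v) := by
        intro f
        rw [← Finset.add_sum_erase _ f hx, ← Finset.add_sum_erase _ f hwm]
      rw [e1 g', e1 g]
      have hsame : ∑ v ∈ (Finset.univ.erase x).erase w, g' v
          = ∑ v ∈ (Finset.univ.erase x).erase w, g v := by
        apply Finset.sum_congr rfl
        intro v hv
        simp only [Finset.mem_erase] at hv
        exact g'other v hv.2.1 hv.1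
      rw [hsame, g'x, g'w, hgx1]
      omega

lemma exists_nbr {V : Type*} {G : SimpleGraph V} (hc : G.Connected)
    {a b : V} (hab : a ≠ b) : ∀ v, ∃ u, G.Adj v u := by
  intro v
  rcases ne_or_eq v a with h | rfl
  · obtain ⟨p⟩ := hc.preconnected v a
    cases p with
    | nil => exact absurd rfl h
    | cons hadj _ => exact ⟨_, hadj⟩
  · obtain ⟨p⟩ := hc.preconnected v b
    cases p with
    | nil => exact absurd rfl hab
    | cons hadj _ => exact ⟨_, hadj⟩

lemma trdf_one {V : Type*} {G : SimpleGraph V} (h : ∀ v, ∃ u, G.Adj v u) :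
    TRDF G (fun _ => 1) := by
  refine ⟨fun _ => by norm_num, fun v hv => by norm_num at hv, fun v _ => ?_⟩
  obtain ⟨u, hu⟩ := h v
  exact ⟨u, hu, by norm_num⟩

lemma trdn_mem {V : Type*} [Fintype V] {G : SimpleGraph V} (h : ∀ v, ∃ u, G.Adj v u) :
    ∃ g : V → ℕ, TRDF G g ∧ trdn G = ∑ v, g v := by
  have hne : {w | ∃ f : V → ℕ, TRDF G f ∧ w = ∑ v, f v}.Nonempty :=
    ⟨∑ _v : V, 1, fun _ => 1, trdf_one h, rfl⟩
  have := Nat.sInf_mem hne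
  obtain ⟨g, hg, hsum⟩ := this
  exact ⟨g, hg, hsum⟩

lemma trdn_le {V : Type*} [Fintype V] {G : SimpleGraph V} {g : V → ℕ} (hg : TRDF G g) :
    trdn G ≤ ∑ v, g v :=
  Nat.sInf_le ⟨g, hg, rfl⟩

lemma sum_ge_three {V : Type*} [Fintype V] {H : SimpleGraph V} {g : V → ℕ}
    (hg : TRDF H g) {a b c : V} (hab : a ≠ b) (hac : a ≠ c) (hbc : b ≠ c) :
    3 ≤ ∑ v, g v := by
  classical
  obtain ⟨hg2, hg0, hgp⟩ := hg
  by_cases hall : 0 < g a ∧ 0 < g b ∧ 0 < g c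
  · have hsub : ({a, b, c} : Finset V) ⊆ Finset.univ := Finset.subset_univ _
    have : ∑ v ∈ ({a, b, c} : Finset V), g v ≤ ∑ v, g v :=
      Finset.sum_le_sum_of_subset hsub
    rw [Finset.sum_insert (by simp [hab, hac]), Finset.sum_insert (by simp [hbc]),
      Finset.sum_singleton] at this
    omega
  · have : ∃ t, g t = 0 := by
      by_contra h
      push_neg at h
      exact hall ⟨Nat.pos_of_ne_zero (h a), Nat.pos_of_ne_zero (h b), Nat.pos_of_ne_zero (h c)⟩
    obtain ⟨t, ht⟩ := this
    obtain ⟨u, _, hu2⟩ := hg0 t ht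
    obtain ⟨p, hup, hpp⟩ := hgp u (by omega)
    have hupne : u ≠ p := hup.ne
    have hsub : ({u, p} : Finset V) ⊆ Finset.univ := Finset.subset_univ _
    have : ∑ v ∈ ({u, p} : Finset V), g v ≤ ∑ v, g v := Finset.sum_le_sum_of_subset hsub
    rw [Finset.sum_insert (by simp [hupne]), Finset.sum_singleton] at this
    omega

theorem stmt13 {V : Type*} [Fintype V] (G : SimpleGraph V) [DecidableRel G.Adj]
    (htree : G.IsTree)
    (hne : ∃ a b, Gᶜ.Adj a b)
    (hcrit : ∀ a b, Gᶜ.Adj a b → trdn (addEdge G a b) < trdn G) :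
    (∀ x w, G.Adj x w → G.degree w = 1 → G.degree x ≤ 2) ∧
    ¬ ∃ x w₁ w₂, w₁ ≠ w₂ ∧ G.Adj x w₁ ∧ G.Adj x w₂ ∧
        G.degree w₁ = 1 ∧ G.degree w₂ = 1 := by
  classical
  obtain ⟨a0, b0, hab0⟩ := hne
  have hnbr : ∀ v, ∃ u, G.Adj v u := exists_nbr htree.isConnected hab0.ne
  have hnbr' : ∀ y z, ∀ v : V, ∃ u, (addEdge G y z).Adj v u := by
    intro y z v
    obtain ⟨u, hu⟩ := hnbr v
    exact ⟨u, (addEdge_adj G).2 (Or.inl hu)⟩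
  have part1 : ∀ x w, G.Adj x w → G.degree w = 1 → G.degree x ≤ 2 := by
    intro x w hxw hdw
    by_contra hdeg
    push_neg at hdeg
    have hw : ∀ u, G.Adj w u → u = x := by
      intro u hu
      have h1 : u ∈ G.neighborFinset w := (SimpleGraph.mem_neighborFinset G w u).2 hu
      have h2 : x ∈ G.neighborFinset w := (SimpleGraph.mem_neighborFinset G w x).2 hxw.symm
      have hcard : (G.neighborFinset w).card ≤ 1 := by
        rw [← SimpleGraph.card_neighborFinset_eq_degree] at hdw
        omega
      exact Finset.card_le_one.1 hcard u h1 x h2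
    have hwmem : w ∈ G.neighborFinset x := (SimpleGraph.mem_neighborFinset G x w).2 hxw
    have hcard2 : 1 < ((G.neighborFinset x).erase w).card := by
      rw [Finset.card_erase_of_mem hwmem, SimpleGraph.card_neighborFinset_eq_degree]
      omega
    obtain ⟨y, hy, z, hz, hyz⟩ := Finset.one_lt_card.1 hcard2
    obtain ⟨hyw, hymem⟩ := Finset.mem_erase.1 hy
    obtain ⟨hzw, hzmem⟩ := Finset.mem_erase.1 hz
    have hxy : G.Adj x y := (SimpleGraph.mem_neighborFinset G x y).1 hymem
    have hxz : G.Adj x z := (SimpleGraph.mem_neighborFinset G x z).1 hzmem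
    have hcyz : Gᶜ.Adj y z :=
      (G.compl_adj y z).2 ⟨hyz, fun h => no_triangle htree.IsAcyclic hxy hxz h⟩
    have hlt := hcrit y z hcyz
    obtain ⟨g, hg, hsum⟩ := trdn_mem (hnbr' y z)
    obtain ⟨g', hg', hle⟩ := key hxw hw hxy hxz (Ne.symm hyw) (Ne.symm hzw) hyz g hg
    have := trdn_le hg'
    omega
  refine ⟨part1, ?_⟩
  rintro ⟨x, w₁, w₂, h12, h1, h2, d1, d2⟩
  have hdegle := part1 x w₁ h1 d1
  have hm1 : w₁ ∈ G.neighborFinset x := (SimpleGraph.mem_neighborFinset G x w₁).2 h1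
  have hm2 : w₂ ∈ G.neighborFinset x := (SimpleGraph.mem_neighborFinset G x w₂).2 h2
  have hsub : ({w₁, w₂} : Finset V) ⊆ G.neighborFinset x := by
    intro u hu
    rcases Finset.mem_insert.1 hu with rfl | hu
    · exact hm1
    · rw [Finset.mem_singleton.1 hu]; exact hm2
  have hcard12 : ({w₁, w₂} : Finset V).card = 2 := by
    rw [Finset.card_insert_of_notMem (by simp [h12]), Finset.card_singleton]
  have hnf : G.neighborFinset x = {w₁, w₂} := by
    apply (Finset.eq_of_subset_of_card_le hsub ?_).symm
    rw [hcard12, SimpleGraph.card_neighborFinset_eq_degree]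
    exact hdegle
  have hxnbr : ∀ u, G.Adj x u → u = w₁ ∨ u = w₂ := by
    intro u hu
    have : u ∈ G.neighborFinset x := (SimpleGraph.mem_neighborFinset G x u).2 hu
    rw [hnf] at this
    simpa using this
  have hleaf : ∀ (w : V), G.degree w = 1 → G.Adj x w → ∀ u, G.Adj w u → u = x := by
    intro w hdw hxw u hu
    have h1 : u ∈ G.neighborFinset w := (SimpleGraph.mem_neighborFinset G w u).2 hu
    have h2 : x ∈ G.neighborFinset w := (SimpleGraph.mem_neighborFinset G w x).2 hxw.symm
    have hcard : (G.neighborFinset w).card ≤ 1 := by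
      rw [← SimpleGraph.card_neighborFinset_eq_degree] at hdw
      omega
    exact Finset.card_le_one.1 hcard u h1 x h2
  have hw1 := hleaf w₁ d1 h1
  have hw2 := hleaf w₂ d2 h2
  -- every vertex is x, w₁ or w₂
  have hclass : ∀ v : V, v = x ∨ v = w₁ ∨ v = w₂ := by
    have step : ∀ a b : V, (a = x ∨ a = w₁ ∨ a = w₂) → G.Adj a b →
        (b = x ∨ b = w₁ ∨ b = w₂) := by
      rintro a b (rfl | rfl | rfl) hab
      · rcases hxnbr b hab with rfl | rfl
        · exact Or.inr (Or.inl rfl)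
        · exact Or.inr (Or.inr rfl)
      · exact Or.inl (hw1 b hab)
      · exact Or.inl (hw2 b hab)
    have walkclaim : ∀ (a v : V), G.Walk a v → (a = x ∨ a = w₁ ∨ a = w₂) →
        (v = x ∨ v = w₁ ∨ v = w₂) := by
      intro a v p
      induction p with
      | nil => exact id
      | cons hadj q ih => exact fun ha => ih (step _ _ ha hadj)
    intro v
    obtain ⟨p⟩ := htree.isConnected.preconnected x v
    exact walkclaim x v p (Or.inl rfl)
  have hnadj : ¬ G.Adj w₁ w₂ := by
    intro h
    have := hw1 w₂ h
    exact h2.ne' this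
  have hcompl : Gᶜ.Adj w₁ w₂ := (G.compl_adj w₁ w₂).2 ⟨h12, hnadj⟩
  have hlt := hcrit w₁ w₂ hcompl
  -- trdn G ≤ 3
  set f : V → ℕ := fun v => if v = x then 2 else if v = w₁ then 1 else 0 with hf
  have hfx : f x = 2 := by simp [hf]
  have hfw1 : f w₁ = 1 := by simp [hf, h1.ne']
  have hftrdf : TRDF G f := by
    refine ⟨fun v => by simp only [hf]; split_ifs <;> omega, ?_, ?_⟩
    · intro v hv
      have hvx : v ≠ x := fun h => by rw [h, hfx] at hv; omega
      have hvw1 : v ≠ w₁ := fun h => by rw [h, hfw1] at hv; omega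
      have : v = w₂ := by rcases hclass v with h | h | h <;> tauto
      subst this
      exact ⟨x, h2.symm, hfx⟩
    · intro v hv
      rcases hclass v with heq | heq | heq
      · exact heq ▸ ⟨w₁, h1, by rw [hfw1]; omega⟩
      · exact heq ▸ ⟨x, h1.symm, by rw [hfx]; omega⟩
      · exfalso
        rw [heq, show f w₂ = 0 from by simp [hf, h2.ne', Ne.symm h12]] at hv
        omega
  have hfsum : ∑ v, f v ≤ 3 := by
    have hsub2 : (Finset.univ : Finset V) ⊆ {x, w₁, w₂} := by
      intro v _
      rcases hclass v with rfl | rfl | rfl <;> simp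
    calc ∑ v, f v ≤ ∑ v ∈ ({x, w₁, w₂} : Finset V), f v :=
          Finset.sum_le_sum_of_subset hsub2
      _ ≤ 3 := by
          rw [Finset.sum_insert (by simp [h1.ne, h2.ne]),
            Finset.sum_insert (by simp [h12]), Finset.sum_singleton,
            hfx, hfw1, show f w₂ = 0 from by simp [hf, h2.ne', Ne.symm h12]]
          omega
  have htG : trdn G ≤ 3 := le_trans (trdn_le hftrdf) hfsum
  obtain ⟨g, hg, hsum⟩ := trdn_mem (hnbr' w₁ w₂)
  have h3 : 3 ≤ ∑ v, g v :=
    sum_ge_three hg (a := x) (b := w₁) (c := w₂) h1.ne h2.ne h12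
  omega
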